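/- Let A, P, C be as above with AᵀP + PA + CᵀC ≤ 0, P symmetric positive semidefinite, and additionally P ≤ q·I for some q ≥ 0. Then for every initial condition x₀ and every T ≥ 0, ∫₀ᵀ ‖C e^{Aτ} x₀‖² dτ ≤ q‖x₀‖². -/

import Mathlib

/-!
Along a trajectory `x(τ) = e^{Aτ} x₀` of `x' = A x`, the storage function `V(x) = xᵀ P x` has
derivative `xᵀ (AᵀP + PA) x ≤ -‖C x‖²`. Integrating this dissipation inequality over `[0, T]` bounds
the output energy by `V(x₀) - V(x(T)) ≤ V(x₀)`, using `P ≥ 0`, and `V(x₀) ≤ q ‖x₀‖²` since `P ≤ q I`.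
-/

open Matrix

section Calculus

variable {𝕜 : Type*} [NontriviallyNormedField 𝕜] {m l : Type*} [Fintype m] {t : 𝕜}

theorem HasDerivAt.dotProduct {u v : 𝕜 → m → 𝕜} {u' v' : m → 𝕜} (hu : HasDerivAt u u' t)
    (hv : HasDerivAt v v' t) :
    HasDerivAt (fun s => u s ⬝ᵥ v s) (u' ⬝ᵥ v t + u t ⬝ᵥ v') t := by
  have h := HasDerivAt.fun_sum fun i (_ : i ∈ Finset.univ) =>
    (hasDerivAt_pi.1 hu i).mul (hasDerivAt_pi.1 hv i)
  rw [Finset.sum_add_distrib] at h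
  exact h

theorem HasDerivAt.const_mulVec (M : Matrix l m 𝕜) {u : 𝕜 → m → 𝕜} {u' : m → 𝕜}
    (hu : HasDerivAt u u' t) : HasDerivAt (fun s => M *ᵥ u s) (M *ᵥ u') t :=
  hasDerivAt_pi.2 fun i => by
    simpa [mulVec] using (hasDerivAt_const t (M i)).dotProduct hu

end Calculus

section Exponential

-- `NormedSpace.exp` is independent of the norm; any normed-algebra structure on matrices will do.
attribute [local instance] Matrix.linftyOpNormedAddCommGroup Matrix.linftyOpNormedRing
  Matrix.linftyOpNormedAlgebra

theorem hasDerivAt_exp_smul_mulVec {𝕂 m : Type*} [RCLike 𝕂] [Fintype m] [DecidableEq m]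
    (A : Matrix m m 𝕂) (x : m → 𝕂) (t : 𝕂) :
    HasDerivAt (fun s => NormedSpace.exp (s • A) *ᵥ x) (A *ᵥ (NormedSpace.exp (t • A) *ᵥ x)) t := by
  let evalAt : Matrix m m 𝕂 →L[𝕂] (m → 𝕂) :=
    ((LinearMap.applyₗ x).comp Matrix.toLin'.toLinearMap).toContinuousLinearMap
  rw [mulVec_mulVec]
  exact evalAt.hasFDerivAt.comp_hasDerivAt t (hasDerivAt_exp_smul_const' A t)

end Exponential

section Dissipation

variable {m k : Type*} [Fintype m] [Fintype k] {A P : Matrix m m ℝ} {C : Matrix k m ℝ}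

theorem dissipation_inequality (hLyap : (-(Aᵀ * P + P * A + Cᵀ * C)).PosSemidef) (x : m → ℝ) :
    A *ᵥ x ⬝ᵥ P *ᵥ x + x ⬝ᵥ P *ᵥ (A *ᵥ x) ≤ -(C *ᵥ x ⬝ᵥ C *ᵥ x) := by
  have h := hLyap.dotProduct_mulVec_nonneg x
  simp only [star_trivial, neg_mulVec, add_mulVec, dotProduct_neg, dotProduct_add,
    ← mulVec_mulVec] at h
  rw [dotProduct_mulVec x Aᵀ, dotProduct_mulVec x Cᵀ, vecMul_transpose, vecMul_transpose] at h
  linarith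

theorem integral_output_sq_le_of_dissipation
    (hLyap : (-(Aᵀ * P + P * A + Cᵀ * C)).PosSemidef) {x : ℝ → m → ℝ}
    (hx : ∀ t, HasDerivAt x (A *ᵥ x t) t) {a b : ℝ} (hab : a ≤ b) :
    ∫ t in a..b, C *ᵥ x t ⬝ᵥ C *ᵥ x t ≤ x a ⬝ᵥ P *ᵥ x a - x b ⬝ᵥ P *ᵥ x b := by
  have hV : ∀ t, HasDerivAt (fun s => -(x s ⬝ᵥ P *ᵥ x s))
      (-(A *ᵥ x t ⬝ᵥ P *ᵥ x t + x t ⬝ᵥ P *ᵥ (A *ᵥ x t))) t := fun t =>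
    ((hx t).dotProduct ((hx t).const_mulVec P)).neg
  have hxc : Continuous x := continuous_iff_continuousAt.2 fun t => (hx t).continuousAt
  have hCx : Continuous fun t => C *ᵥ x t := continuous_const.matrix_mulVec hxc
  have hyc : Continuous fun t => C *ᵥ x t ⬝ᵥ C *ᵥ x t := hCx.dotProduct hCx
  have := intervalIntegral.integral_le_sub_of_hasDeriv_right_of_le hab
    (fun t _ => (hV t).continuousAt.continuousWithinAt) (fun t _ => (hV t).hasDerivWithinAt)
    hyc.integrableOn_Icc (fun t _ => by linarith [dissipation_inequality hLyap (x t)])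
  linarith

end Dissipation

theorem dotProduct_mulVec_le_of_posSemidef_smul_one_sub {m : Type*} [Fintype m] [DecidableEq m]
    {P : Matrix m m ℝ} {q : ℝ} (hPq : (q • (1 : Matrix m m ℝ) - P).PosSemidef) (x : m → ℝ) :
    x ⬝ᵥ P *ᵥ x ≤ q * (x ⬝ᵥ x) := by
  have h := hPq.dotProduct_mulVec_nonneg x
  simp only [star_trivial, sub_mulVec, smul_mulVec, one_mulVec, dotProduct_sub, dotProduct_smul,
    smul_eq_mul] at h
  linarith

theorem state_to_output_gain_bound_general {n p : ℕ}
    (A P : Matrix (Fin n) (Fin n) ℝ) (C : Matrix (Fin p) (Fin n) ℝ)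
    (q : ℝ)
    (hP : P.PosSemidef)
    (hLyap : (-(Aᵀ * P + P * A + Cᵀ * C)).PosSemidef)
    (hPq : (q • (1 : Matrix (Fin n) (Fin n) ℝ) - P).PosSemidef) :
    ∀ (x₀ : Fin n → ℝ) (T : ℝ), 0 ≤ T →
      ∫ τ in (0:ℝ)..T,
        (C.mulVec ((NormedSpace.exp (τ • A)).mulVec x₀)) ⬝ᵥ
          (C.mulVec ((NormedSpace.exp (τ • A)).mulVec x₀))
        ≤ q * (x₀ ⬝ᵥ x₀) := by
  intro x₀ T hT
  set x : ℝ → Fin n → ℝ := fun τ => NormedSpace.exp (τ • A) *ᵥ x₀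
  have hx0 : x 0 = x₀ := by simp [x]
  calc ∫ τ in (0:ℝ)..T, C *ᵥ x τ ⬝ᵥ C *ᵥ x τ
      ≤ x 0 ⬝ᵥ P *ᵥ x 0 - x T ⬝ᵥ P *ᵥ x T :=
        integral_output_sq_le_of_dissipation hLyap (hasDerivAt_exp_smul_mulVec A x₀) hT
    _ ≤ x₀ ⬝ᵥ P *ᵥ x₀ := by
        simpa [hx0] using hP.dotProduct_mulVec_nonneg (x T)
    _ ≤ q * (x₀ ⬝ᵥ x₀) := dotProduct_mulVec_le_of_posSemidef_smul_one_sub hPq x₀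

/-- Parameterised state-to-output gain bound: with AᵀP+PA+CᵀC ⪯ 0 and P ⪯ qI,
∫₀ᵀ ‖C e^{Aτ} x₀‖² dτ ≤ q‖x₀‖². -/
theorem state_to_output_gain_bound {n p : ℕ}
    (A P : Matrix (Fin n) (Fin n) ℝ) (C : Matrix (Fin p) (Fin n) ℝ)
    (q : ℝ) (hq : 0 ≤ q)
    (hP : P.PosSemidef)
    (hLyap : (-(Aᵀ * P + P * A + Cᵀ * C)).PosSemidef)
    (hPq : (q • (1 : Matrix (Fin n) (Fin n) ℝ) - P).PosSemidef) :
    ∀ (x₀ : Fin n → ℝ) (T : ℝ), 0 ≤ T →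
      ∫ τ in (0:ℝ)..T,
        (C.mulVec ((NormedSpace.exp (τ • A)).mulVec x₀)) ⬝ᵥ
          (C.mulVec ((NormedSpace.exp (τ • A)).mulVec x₀))
        ≤ q * (x₀ ⬝ᵥ x₀) :=
  state_to_output_gain_bound_general A P C q hP hLyap hPq
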